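/- arXiv:2010.04239 — 2 statements merged into one kernel-verified Lean document; each statement's English description precedes it below -/
import Mathlib

section
/- The deterministic identification capacity of a DMC in the double-exponential scale is zero: let W be a DMC with finite alphabets X, Y, and fix R > 0 and λ1, λ2 ≥ 0 with λ1 + λ2 < 1. Then for all sufficiently large n there do not exist codewords u_1,…,u_M ∈ X^n and decoding sets D_1,…,D_M ⊆ Y^n with M ≥ 2^{2^{nR}} such that W^n(D_i^c | u_i) ≤ λ1 for all i and W^n(D_j | u_i) ≤ λ2 for all i ≠ j. -/
open Finset

/-- The probability `W^n(D | x^n)` that the output of the `n`-fold memoryless extension of the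
channel `W`, on input `x^n`, lies in the set `D ⊆ Y^n`. -/
def channelPr {X Y : Type*} [Fintype Y] (W : X → Y → ℝ) {n : ℕ}
    (x : Fin n → X) (D : Finset (Fin n → Y)) : ℝ :=
  ∑ y ∈ D, ∏ t, W (x t) (y t)

/-!
An identification code with `λ₁ + λ₂ < 1` cannot use the same codeword for two messages `i ≠ j`:
`D_i` would receive probability at least `1 - λ₁` and at most `λ₂` from that codeword. Hence
`M ≤ |X|^n ≤ 2^{|X| n}`, which is eventually smaller than `2^{2^{nR}}`.
-/

open Filter

section Channel

variable {X Y : Type*} [Fintype Y] {W : X → Y → ℝ} {n : ℕ}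

lemma channelPr_univ (hW1 : ∀ x, ∑ y, W x y = 1) (x : Fin n → X) :
    channelPr W x univ = 1 := by
  rw [channelPr, ← Fintype.prod_sum (fun t y ↦ W (x t) y)]
  simp [hW1]

lemma channelPr_add_channelPr_compl [DecidableEq Y] (hW1 : ∀ x, ∑ y, W x y = 1)
    (x : Fin n → X) (D : Finset (Fin n → Y)) :
    channelPr W x D + channelPr W x Dᶜ = 1 := by
  rw [← channelPr_univ hW1 x]
  exact sum_add_sum_compl D _

lemma injective_of_identification_code [DecidableEq Y] (hW1 : ∀ x, ∑ y, W x y = 1)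
    {ι : Type*} {u : ι → Fin n → X} {D : ι → Finset (Fin n → Y)} {lam1 lam2 : ℝ}
    (hlam : lam1 + lam2 < 1) (h1 : ∀ i, channelPr W (u i) (D i)ᶜ ≤ lam1)
    (h2 : ∀ i j, i ≠ j → channelPr W (u i) (D j) ≤ lam2) :
    Function.Injective u := by
  intro i j hij
  by_contra hne
  have hsplit := channelPr_add_channelPr_compl hW1 (u i) (D i)
  have hcross := h2 j i (Ne.symm hne)
  rw [← hij] at hcross
  linarith [h1 i]

end Channel

lemma eventually_natCast_mul_lt_two_rpow (k : ℕ) {R : ℝ} (hR : 0 < R) :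
    ∀ᶠ n : ℕ in atTop, (k * n : ℝ) < 2 ^ (n * R) := by
  have hr : 1 < (2 : ℝ) ^ R := Real.one_lt_rpow one_lt_two hR
  have hlin := ((isLittleO_coe_const_pow_of_one_lt (R := ℝ) hr).const_mul_left (k : ℝ)).def
    one_half_pos
  filter_upwards [hlin] with n hn
  have hpos : 0 < ((2 : ℝ) ^ R) ^ n := by positivity
  rw [mul_comm (n : ℝ), Real.rpow_mul_natCast zero_le_two]
  rw [Real.norm_of_nonneg (by positivity), Real.norm_of_nonneg hpos.le] at hn
  linarith

lemma eventually_pow_lt_two_rpow_two_rpow (c : ℕ) {R : ℝ} (hR : 0 < R) :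
    ∀ᶠ n : ℕ in atTop, (c ^ n : ℝ) < 2 ^ ((2 : ℝ) ^ (n * R)) := by
  filter_upwards [eventually_natCast_mul_lt_two_rpow c hR] with n hn
  calc (c ^ n : ℝ) ≤ (2 ^ c) ^ n := by exact_mod_cast Nat.pow_le_pow_left c.lt_two_pow_self.le n
    _ = 2 ^ ((c * n : ℕ) : ℝ) := by rw [Real.rpow_natCast, pow_mul]
    _ < 2 ^ ((2 : ℝ) ^ (n * R)) := by
      rw [Real.rpow_lt_rpow_left_iff one_lt_two]
      exact_mod_cast hn

theorem DI_double_exponential_capacity_zero_general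
    {X Y : Type*} [Fintype X] [Fintype Y] [DecidableEq Y]
    (W : X → Y → ℝ) (hW1 : ∀ x, ∑ y, W x y = 1)
    (R lam1 lam2 : ℝ) (hR : 0 < R)
    (hlam : lam1 + lam2 < 1) :
    ∃ N : ℕ, ∀ n ≥ N,
      ¬ ∃ (M : ℕ) (u : Fin M → Fin n → X) (D : Fin M → Finset (Fin n → Y)),
        (2 : ℝ) ^ ((2 : ℝ) ^ ((n : ℝ) * R)) ≤ (M : ℝ) ∧
        (∀ i, channelPr W (u i) (D i)ᶜ ≤ lam1) ∧
        (∀ i j, i ≠ j → channelPr W (u i) (D j) ≤ lam2) := by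
  obtain ⟨N, hN⟩ := eventually_atTop.mp (eventually_pow_lt_two_rpow_two_rpow (Fintype.card X) hR)
  refine ⟨N, fun n hn ⟨M, u, D, hM, h1, h2⟩ ↦ ?_⟩
  have hcard : M ≤ Fintype.card X ^ n := by
    simpa using Fintype.card_le_of_injective u (injective_of_identification_code hW1 hlam h1 h2)
  have hcard' : (M : ℝ) ≤ Fintype.card X ^ n := by exact_mod_cast hcard
  linarith [hN n hn]

/-- The deterministic identification capacity of a DMC in the double-exponential scale is zero:
for any rate `R > 0` and error allowances `lam1 + lam2 < 1`, for all sufficiently large `n` there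
is no DI code with at least `2^{2^{nR}}` messages. -/
theorem DI_double_exponential_capacity_zero
    {X Y : Type*} [Fintype X] [Fintype Y] [DecidableEq Y]
    (W : X → Y → ℝ) (hW0 : ∀ x y, 0 ≤ W x y) (hW1 : ∀ x, ∑ y, W x y = 1)
    (R lam1 lam2 : ℝ) (hR : 0 < R) (hlam1 : 0 ≤ lam1) (hlam2 : 0 ≤ lam2)
    (hlam : lam1 + lam2 < 1) :
    ∃ N : ℕ, ∀ n ≥ N,
      ¬ ∃ (M : ℕ) (u : Fin M → Fin n → X) (D : Fin M → Finset (Fin n → Y)),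
        (2 : ℝ) ^ ((2 : ℝ) ^ ((n : ℝ) * R)) ≤ (M : ℝ) ∧
        (∀ i, channelPr W (u i) (D i)ᶜ ≤ lam1) ∧
        (∀ i j, i ≠ j → channelPr W (u i) (D j) ≤ lam2) :=
  DI_double_exponential_capacity_zero_general W hW1 R lam1 lam2 hR hlam
end

section
/- Existence of a large Hamming-separated codebook inside a type class: let X be a finite alphabet, ε ∈ (0,1), θ(ε) = H₂(ε) + ε·log₂|X| where H₂ is the binary entropy function, and R > 0. Then for all sufficiently large n the following holds: for every n-type p on X (i.e., a pmf with n·p(x) ∈ ℕ for all x) with R ≤ H(p) − 3θ(ε), there exists a set V ⊆ T(p) of sequences in X^n such that |V| ≥ 2^{nR}/2 and d_H(v, v') ≥ nε for all distinct v, v' ∈ V. -/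
/-!
A maximal subset `V` of the type class `T(p)` whose points are pairwise more than `⌊nε⌋` apart
covers `T(p)` by Hamming balls of radius `⌊nε⌋`, so `|T(p)| ≤ |V| · |ball|`. The ball has at most
`∑_{j ≤ nε} C(n, j) |X|^j ≤ 2^{n θ(ε)}` points when `ε ≤ 1/2` and at most `|X|^n ≤ 2^{2n θ(ε)}`
points otherwise, while `|T(p)| ≥ 2^{n H(p)} / (n + 1)^{|X|} ≥ 2^{n (H(p) - θ(ε))}` for large `n`.
Hence `|V| ≥ 2^{n (H(p) - 3θ(ε))} ≥ 2^{nR}`.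
-/

open Finset

/-- Shannon entropy (base 2) of a probability mass function on a finite alphabet. -/
noncomputable def shannonEntropy {X : Type*} [Fintype X] (p : X → ℝ) : ℝ :=
  -∑ x, p x * Real.logb 2 (p x)

/-- Binary entropy function (base 2). -/
noncomputable def binEnt (ε : ℝ) : ℝ :=
  -ε * Real.logb 2 ε - (1 - ε) * Real.logb 2 (1 - ε)

namespace Nat

theorem factorial_mul_pow_le_factorial_mul_pow (k l : ℕ) : k ! * k ^ l ≤ l ! * k ^ k := by
  rcases le_total l k with hlk | hkl
  · have hk : k ! = l ! * k.descFactorial (k - l) := by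
      rw [← factorial_mul_descFactorial (Nat.sub_le k l), Nat.sub_sub_self hlk]
    calc k ! * k ^ l ≤ l ! * k ^ (k - l) * k ^ l := by
          rw [hk]; gcongr; exact descFactorial_le_pow k _
      _ = l ! * k ^ k := by rw [mul_assoc, ← pow_add, Nat.sub_add_cancel hlk]
  · have hl : l ! = k ! * l.descFactorial (l - k) := by
      rw [← factorial_mul_descFactorial (Nat.sub_le l k), Nat.sub_sub_self hkl]
    calc k ! * k ^ l = k ! * k ^ (l - k) * k ^ k := by
          rw [mul_assoc, ← pow_add, Nat.sub_add_cancel hkl]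
      _ ≤ l ! * k ^ k := by
          rw [hl]; gcongr
          calc k ^ (l - k) ≤ (l + 1 - (l - k)) ^ (l - k) := by gcongr; omega
            _ ≤ l.descFactorial (l - k) := pow_sub_le_descFactorial l _

variable {X : Type*} [Fintype X]

/-- The multinomial distribution with parameters `k / ∑ k` has its mode at `k`. -/
theorem multinomial_mul_prod_pow_le (k l : X → ℕ) (h : ∑ x, l x = ∑ x, k x) :
    multinomial univ l * ∏ x, k x ^ l x ≤ multinomial univ k * ∏ x, k x ^ k x := by
  have hpos : 0 < (∏ x, (l x)!) * ∏ x, (k x)! := by positivity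
  refine Nat.le_of_mul_le_mul_left ?_ hpos
  calc (∏ x, (l x)!) * (∏ x, (k x)!) * (multinomial univ l * ∏ x, k x ^ l x)
      = ((∏ x, (l x)!) * multinomial univ l) * ∏ x, ((k x)! * k x ^ l x) := by
        rw [prod_mul_distrib]; ring
    _ = (∑ x, l x)! * ∏ x, ((k x)! * k x ^ l x) := by rw [multinomial_spec]
    _ ≤ (∑ x, k x)! * ∏ x, ((l x)! * k x ^ k x) := by
        rw [h]
        exact Nat.mul_le_mul_left _
          (prod_le_prod' fun x _ => factorial_mul_pow_le_factorial_mul_pow _ _)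
    _ = (∏ x, (l x)!) * (∏ x, (k x)!) * (multinomial univ k * ∏ x, k x ^ k x) := by
        rw [← multinomial_spec univ k, prod_mul_distrib]; ring

variable [DecidableEq X]

theorem card_piAntidiag_univ_le (n : ℕ) :
    #(piAntidiag (univ : Finset X) n) ≤ (n + 1) ^ Fintype.card X := by
  calc #(piAntidiag (univ : Finset X) n) ≤ #(Fintype.piFinset fun _ : X => range (n + 1)) := by
        refine card_le_card fun l hl => Fintype.mem_piFinset.mpr fun x => ?_
        rw [mem_piAntidiag] at hl
        exact mem_range_succ_iff.mpr
          (hl.1 ▸ single_le_sum (fun _ _ => Nat.zero_le _) (mem_univ x))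
    _ = (n + 1) ^ Fintype.card X := by simp

theorem sum_pow_sum_le_mul_multinomial_mul_prod_pow (k : X → ℕ) :
    (∑ x, k x) ^ ∑ x, k x ≤
      (∑ x, k x + 1) ^ Fintype.card X * (multinomial univ k * ∏ x, k x ^ k x) := by
  set n := ∑ x, k x
  calc n ^ n = ∑ l ∈ piAntidiag univ n, multinomial univ l * ∏ x, k x ^ l x := by
        simpa using sum_pow_eq_sum_piAntidiag univ k n
    _ ≤ ∑ l ∈ piAntidiag univ n, multinomial univ k * ∏ x, k x ^ k x :=
        sum_le_sum fun l hl => multinomial_mul_prod_pow_le k l (mem_piAntidiag.mp hl).1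
    _ ≤ (n + 1) ^ Fintype.card X * (multinomial univ k * ∏ x, k x ^ k x) := by
        rw [sum_const, smul_eq_mul]; gcongr; exact card_piAntidiag_univ_le n

end Nat

theorem two_rpow_mul_shannonEntropy_mul_prod_pow {X : Type*} [Fintype X] {n : ℕ} (hn : 0 < n)
    {k : X → ℕ} (hk : ∑ x, k x = n) :
    (2 : ℝ) ^ (n * shannonEntropy fun x => (k x : ℝ) / n) * ∏ x, (k x : ℝ) ^ k x =
      (n : ℝ) ^ n := by
  have hn' : (n : ℝ) ≠ 0 := by positivity
  have hterm : ∀ x, (2 : ℝ) ^ (-(n * ((k x : ℝ) / n * Real.logb 2 ((k x : ℝ) / n)))) *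
      (k x : ℝ) ^ k x = (n : ℝ) ^ k x := by
    intro x
    rcases (k x).eq_zero_or_pos with h0 | hpos
    · simp [h0]
    · have hkx : (k x : ℝ) ≠ 0 := by positivity
      have hexp : -(n * ((k x : ℝ) / n * Real.logb 2 ((k x : ℝ) / n))) =
          Real.logb 2 ((n : ℝ) / k x) * (k x : ℕ) := by
        rw [← mul_assoc, mul_div_cancel₀ _ hn', ← inv_div, Real.logb_inv]; ring
      rw [hexp, Real.rpow_mul zero_le_two, Real.rpow_logb zero_lt_two (by norm_num) (by positivity),
        Real.rpow_natCast, div_pow, div_mul_cancel₀ _ (pow_ne_zero _ hkx)]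
  calc (2 : ℝ) ^ (n * shannonEntropy fun x => (k x : ℝ) / n) * ∏ x, (k x : ℝ) ^ k x
      = ∏ x, (2 : ℝ) ^ (-(n * ((k x : ℝ) / n * Real.logb 2 ((k x : ℝ) / n)))) *
          (k x : ℝ) ^ k x := by
        rw [shannonEntropy, mul_neg, mul_sum, ← sum_neg_distrib, Real.rpow_sum_of_pos zero_lt_two,
          prod_mul_distrib]
    _ = (n : ℝ) ^ n := by rw [prod_congr rfl fun x _ => hterm x, prod_pow_eq_pow_sum, hk]

/-- The type class `T(p)` for `p = k / |ι|`. -/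
def typeClass {X : Type*} [DecidableEq X] (ι : Type*) [Fintype ι] [DecidableEq ι] [Fintype X]
    (k : X → ℕ) : Finset (ι → X) :=
  {v | ∀ a, #{i | v i = a} = k a}

section TypeClass

variable {ι X : Type*} [Fintype ι] [DecidableEq ι] [Fintype X] [DecidableEq X]

theorem mem_typeClass {k : X → ℕ} {v : ι → X} :
    v ∈ typeClass ι k ↔ ∀ a, #{i | v i = a} = k a := by
  simp [typeClass]

theorem typeClass_nonempty {k : X → ℕ} (hk : ∑ a, k a = Fintype.card ι) :
    (typeClass ι k).Nonempty := by
  obtain ⟨e⟩ : Nonempty ((Σ a, Fin (k a)) ≃ ι) := Fintype.card_eq.mp (by simp [hk])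
  refine ⟨fun i => (e.symm i).1, mem_typeClass.mpr fun a => ?_⟩
  calc #{i | (e.symm i).1 = a} = #{s : Σ a, Fin (k a) | s.1 = a} :=
        card_equiv e.symm (by simp)
    _ = k a := by
        rw [← Fintype.card_subtype, Fintype.card_congr (Equiv.sigmaSubtype a), Fintype.card_fin]

open MulAction Nat in
/-- The orbit of one sequence of type `k` under permutations of the positions has
`multinomial k` elements, by the orbit–stabilizer theorem. -/
theorem multinomial_le_card_typeClass {k : X → ℕ} (hk : ∑ a, k a = Fintype.card ι) :
    multinomial univ k ≤ #(typeClass ι k) := by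
  obtain ⟨v, hv⟩ := typeClass_nonempty hk
  rw [mem_typeClass] at hv
  have hstab : Nat.card (stabilizer (Equiv.Perm ι)ᵈᵐᵃ v) = ∏ a, (k a)! := by
    rw [Nat.card_congr (Equiv.subtypeEquiv (q := fun g : Equiv.Perm ι => v ∘ g = v)
        DomMulAct.mk.symm fun _ => DomMulAct.mem_stabilizer_iff),
      Nat.card_eq_fintype_card, DomMulAct.stabilizer_card]
    simp only [Fintype.card_subtype, hv]
  have horbit : orbit (Equiv.Perm ι)ᵈᵐᵃ v ⊆ typeClass ι k := by
    rintro _ ⟨g, rfl⟩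
    refine mem_typeClass.mpr fun a => ?_
    rw [← hv a]
    exact card_equiv (DomMulAct.mk.symm g) (by simp [DomMulAct.smul_apply])
  have hcard : (orbit (Equiv.Perm ι)ᵈᵐᵃ v).ncard * ∏ a, (k a)! = (∑ a, k a)! := by
    rw [← hstab, ← index_stabilizer, mul_comm, Subgroup.card_mul_index, hk,
      Nat.card_congr DomMulAct.mk.symm, Nat.card_eq_fintype_card, Fintype.card_perm]
  calc multinomial univ k = (orbit (Equiv.Perm ι)ᵈᵐᵃ v).ncard :=
        Nat.eq_of_mul_eq_mul_left (prod_pos fun a _ => factorial_pos _)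
          (by rw [multinomial_spec, ← hcard, mul_comm])
    _ ≤ (typeClass ι k : Set (ι → X)).ncard := Set.ncard_le_ncard horbit (Set.toFinite _)
    _ = #(typeClass ι k) := Set.ncard_coe_finset _

theorem two_rpow_mul_shannonEntropy_le_card_typeClass [Nonempty ι] {k : X → ℕ}
    (hk : ∑ a, k a = Fintype.card ι) :
    (2 : ℝ) ^ (Fintype.card ι * shannonEntropy fun x => (k x : ℝ) / Fintype.card ι) ≤
      ((Fintype.card ι : ℝ) + 1) ^ Fintype.card X * #(typeClass ι k) := by
  have hprod : (0 : ℝ) < ∏ x, (k x : ℝ) ^ k x := by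
    exact_mod_cast prod_pos fun x _ => Nat.pow_self_pos
  have hcount := Nat.sum_pow_sum_le_mul_multinomial_mul_prod_pow k
  rw [hk] at hcount
  refine le_of_mul_le_mul_right ?_ hprod
  rw [two_rpow_mul_shannonEntropy_mul_prod_pow Fintype.card_pos hk]
  calc ((Fintype.card ι : ℕ) : ℝ) ^ Fintype.card ι
      ≤ ((Fintype.card ι : ℝ) + 1) ^ Fintype.card X *
          ((Nat.multinomial univ k : ℝ) * ∏ x, (k x : ℝ) ^ k x) := by exact_mod_cast hcount
    _ ≤ ((Fintype.card ι : ℝ) + 1) ^ Fintype.card X * #(typeClass ι k) *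
          ∏ x, (k x : ℝ) ^ k x := by
        rw [mul_assoc]; gcongr; exact_mod_cast multinomial_le_card_typeClass hk

end TypeClass

section Hamming

variable {ι X : Type*} [Fintype ι] [DecidableEq ι] [Fintype X] [DecidableEq X]

theorem card_hammingBall_le (v : ι → X) (r : ℕ) :
    #{w | hammingDist v w ≤ r} ≤
      ∑ j ∈ range (r + 1), (Fintype.card ι).choose j * Fintype.card X ^ j := by
  let agreeOff (S : Finset ι) : Finset (ι → X) :=
    Fintype.piFinset fun i => if i ∈ S then univ else {v i}
  have hcard (S : Finset ι) : #(agreeOff S) = Fintype.card X ^ #S := by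
    simp only [agreeOff, Fintype.card_piFinset, apply_ite card, card_univ, card_singleton,
      prod_ite_mem, univ_inter, prod_const]
  calc #{w | hammingDist v w ≤ r}
      ≤ #((range (r + 1)).biUnion fun j => (powersetCard j univ).biUnion agreeOff) := by
        refine card_le_card fun w hw => ?_
        simp only [mem_filter, mem_univ, true_and] at hw
        simp only [mem_biUnion, mem_range, mem_powersetCard, subset_univ, true_and]
        refine ⟨_, Nat.lt_succ_of_le hw, ({i | v i ≠ w i} : Finset ι), rfl,
          Fintype.mem_piFinset.mpr fun i => ?_⟩
        by_cases hi : v i = w i <;> simp [hi]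
    _ ≤ ∑ j ∈ range (r + 1), ∑ S ∈ powersetCard j univ, #(agreeOff S) :=
        card_biUnion_le.trans (sum_le_sum fun j _ => card_biUnion_le)
    _ = ∑ j ∈ range (r + 1), (Fintype.card ι).choose j * Fintype.card X ^ j := by
        refine sum_congr rfl fun j _ => ?_
        rw [sum_congr rfl fun S hS => (hcard S).trans (by rw [(mem_powersetCard.mp hS).2]),
          sum_const, card_powersetCard, card_univ, smul_eq_mul]

theorem exists_separated_subset_card_le_sum (T : Finset (ι → X)) (r : ℕ) :
    ∃ V ⊆ T, (∀ v ∈ V, ∀ w ∈ V, v ≠ w → r < hammingDist v w) ∧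
      #T ≤ ∑ v ∈ V, #{w | hammingDist v w ≤ r} := by
  let IsSeparated (V : Finset (ι → X)) : Prop := ∀ v ∈ V, ∀ w ∈ V, v ≠ w → r < hammingDist v w
  obtain ⟨V, hV, hmax⟩ := exists_max_image ({V ∈ T.powerset | IsSeparated V}) card
    ⟨∅, by simp [IsSeparated]⟩
  obtain ⟨hVT, hVsep⟩ := mem_filter.mp hV
  refine ⟨V, mem_powerset.mp hVT, hVsep, ?_⟩
  have hcover : ∀ u ∈ T, ∃ v ∈ V, hammingDist v u ≤ r := by
    intro u hu
    by_contra! hfar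
    have huV : u ∉ V := fun huV => by simpa using hfar u huV
    have hsep : IsSeparated (insert u V) := by
      simp only [IsSeparated, mem_insert, forall_eq_or_imp]
      refine ⟨⟨fun h => absurd rfl h, fun w hw _ => hammingDist_comm u w ▸ hfar w hw⟩,
        fun v hv => ⟨fun _ => hfar v hv, hVsep v hv⟩⟩
    have := hmax (insert u V) (mem_filter.mpr
      ⟨mem_powerset.mpr (insert_subset hu (mem_powerset.mp hVT)), hsep⟩)
    rw [card_insert_of_notMem huV] at this
    omega
  calc #T ≤ #(V.biUnion fun v => {w | hammingDist v w ≤ r}) := by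
        refine card_le_card fun u hu => ?_
        obtain ⟨v, hv, hvu⟩ := hcover u hu
        exact mem_biUnion.mpr ⟨v, hv, by simpa using hvu⟩
    _ ≤ ∑ v ∈ V, #{w | hammingDist v w ≤ r} := card_biUnion_le

end Hamming

theorem binEnt_pos {ε : ℝ} (hε : ε ∈ Set.Ioo (0 : ℝ) 1) : 0 < binEnt ε := by
  obtain ⟨h0, h1⟩ := hε
  have l1 : Real.logb 2 ε < 0 := Real.logb_neg one_lt_two h0 h1
  have l2 : Real.logb 2 (1 - ε) ≤ 0 := Real.logb_nonpos one_lt_two (by linarith) (by linarith)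
  unfold binEnt; nlinarith

theorem pow_mul_one_sub_pow_le_of_le {ε : ℝ} (hε0 : 0 ≤ ε) (hε : ε ≤ 1 - ε) {n j r : ℕ}
    (hjr : j ≤ r) (hrn : r ≤ n) : ε ^ r * (1 - ε) ^ (n - r) ≤ ε ^ j * (1 - ε) ^ (n - j) := by
  have h1 : 0 ≤ 1 - ε := hε0.trans hε
  calc ε ^ r * (1 - ε) ^ (n - r) = ε ^ j * (ε ^ (r - j) * (1 - ε) ^ (n - r)) := by
        rw [← mul_assoc, ← pow_add, Nat.add_sub_cancel' hjr]
    _ ≤ ε ^ j * ((1 - ε) ^ (r - j) * (1 - ε) ^ (n - r)) := by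
        gcongr
    _ = ε ^ j * (1 - ε) ^ (n - j) := by rw [← pow_add]; congr 2; omega

theorem sum_range_choose_le_two_rpow_mul_binEnt {n r : ℕ} {ε : ℝ} (hε0 : 0 < ε) (hε : ε ≤ 1 / 2)
    (hr : r ≤ n * ε) : ∑ j ∈ range (r + 1), (n.choose j : ℝ) ≤ 2 ^ (n * binEnt ε) := by
  have hrn : r ≤ n := by
    have : (r : ℝ) ≤ n := hr.trans (by nlinarith [(n.cast_nonneg : (0 : ℝ) ≤ n)])
    exact_mod_cast this
  have h1ε : 0 < 1 - ε := by linarith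
  set P := ε ^ r * (1 - ε) ^ (n - r)
  have hP : 0 < P := by positivity
  have hmass : (∑ j ∈ range (r + 1), (n.choose j : ℝ)) * P ≤ 1 := by
    calc (∑ j ∈ range (r + 1), (n.choose j : ℝ)) * P
        ≤ ∑ j ∈ range (r + 1), (n.choose j : ℝ) * (ε ^ j * (1 - ε) ^ (n - j)) := by
          rw [sum_mul]
          refine sum_le_sum fun j hj => ?_
          gcongr
          exact pow_mul_one_sub_pow_le_of_le hε0.le (by linarith)
            (Nat.lt_succ_iff.mp (mem_range.mp hj)) hrn
      _ ≤ ∑ j ∈ range (n + 1), (n.choose j : ℝ) * (ε ^ j * (1 - ε) ^ (n - j)) := by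
          exact sum_le_sum_of_subset_of_nonneg (range_subset_range.mpr (by omega))
            fun j _ _ => by positivity
      _ = (ε + (1 - ε)) ^ n := by rw [add_pow]; exact sum_congr rfl fun j _ => by ring
      _ = 1 := by norm_num
  have hlogP : 2 ^ (-(n * binEnt ε)) ≤ P := by
    rw [← Real.rpow_logb two_pos (by norm_num) hP]
    apply Real.rpow_le_rpow_of_exponent_le one_le_two
    have hL : Real.logb 2 ε ≤ Real.logb 2 (1 - ε) :=
      Real.logb_le_logb_of_le one_lt_two hε0 (by linarith)
    rw [Real.logb_mul (by positivity) (by positivity), Real.logb_pow, Real.logb_pow, binEnt,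
      Nat.cast_sub hrn]
    nlinarith [mul_nonneg (sub_nonneg.mpr hr) (sub_nonneg.mpr hL)]
  calc _ ≤ 1 / P := (le_div_iff₀ hP).mpr hmass
    _ ≤ 2 ^ (n * binEnt ε) := by
        rwa [one_div_le hP (by positivity), one_div, ← Real.rpow_neg zero_le_two]

open Filter Asymptotics in
theorem eventually_add_one_pow_le_two_rpow (c : ℕ) {θ : ℝ} (hθ : 0 < θ) :
    ∀ᶠ n : ℕ in atTop, ((n : ℝ) + 1) ^ c ≤ 2 ^ (n * θ) := by
  have hr : 1 < (2 : ℝ) ^ θ := Real.one_lt_rpow one_lt_two hθ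
  have h := ((isLittleO_pow_const_const_pow_of_one_lt (R := ℝ) c hr).comp_tendsto
    (tendsto_add_atTop_nat 1)).bound (inv_pos.mpr (zero_lt_one.trans hr))
  filter_upwards [h] with n hn
  simp only [Function.comp_apply, Real.norm_eq_abs, Nat.cast_add, Nat.cast_one] at hn
  rw [abs_of_nonneg (by positivity), abs_of_nonneg (by positivity), pow_succ',
    inv_mul_cancel_left₀ (by positivity)] at hn
  rwa [mul_comm, Real.rpow_mul zero_le_two, Real.rpow_natCast]

section GilbertVarshamov

variable {ι X : Type*} [Fintype ι] [DecidableEq ι] [Fintype X] [DecidableEq X]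

theorem card_hammingBall_le_two_rpow [Nonempty X] {ε : ℝ} (hε : ε ∈ Set.Ioo (0 : ℝ) 1)
    (v : ι → X) {r : ℕ} (hr : r ≤ Fintype.card ι * ε) :
    (#{w | hammingDist v w ≤ r} : ℝ) ≤
      2 ^ (2 * (Fintype.card ι * (binEnt ε + ε * Real.logb 2 (Fintype.card X)))) := by
  set n := Fintype.card ι
  set c := Fintype.card X
  have hc : (1 : ℝ) ≤ c := by exact_mod_cast Fintype.card_pos
  set L := Real.logb 2 c
  have hL : 0 ≤ L := Real.logb_nonneg one_lt_two hc
  have hpow (m : ℕ) : (c : ℝ) ^ m = 2 ^ (m * L) := by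
    rw [mul_comm, Real.rpow_mul zero_le_two,
      Real.rpow_logb zero_lt_two (by norm_num) (by linarith), Real.rpow_natCast]
  have hH := (binEnt_pos hε).le
  have hnε : 0 ≤ n * ε := mul_nonneg n.cast_nonneg hε.1.le
  rcases le_or_gt ε (1 / 2) with hhalf | hhalf
  · calc (#{w | hammingDist v w ≤ r} : ℝ)
        ≤ ∑ j ∈ range (r + 1), (n.choose j : ℝ) * (c : ℝ) ^ j := by
          exact_mod_cast card_hammingBall_le v r
      _ ≤ ∑ j ∈ range (r + 1), (n.choose j : ℝ) * (c : ℝ) ^ r := by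
          gcongr with j hj
          exact Nat.lt_succ_iff.mp (mem_range.mp hj)
      _ = (c : ℝ) ^ r * ∑ j ∈ range (r + 1), (n.choose j : ℝ) := by rw [← sum_mul, mul_comm]
      _ ≤ 2 ^ (n * ε * L) * 2 ^ (n * binEnt ε) := by
          rw [hpow]
          gcongr
          · exact one_le_two
          · exact sum_range_choose_le_two_rpow_mul_binEnt hε.1 hhalf hr
      _ = 2 ^ (n * ε * L + n * binEnt ε) := (Real.rpow_add zero_lt_two _ _).symm
      _ ≤ _ := Real.rpow_le_rpow_of_exponent_le one_le_two (by nlinarith [mul_nonneg hnε hL])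
  · calc (#{w | hammingDist v w ≤ r} : ℝ) ≤ (c : ℝ) ^ n := by
          exact_mod_cast (card_le_univ _).trans (by simp [n, c])
      _ = 2 ^ (n * L) := hpow n
      _ ≤ _ := Real.rpow_le_rpow_of_exponent_le one_le_two
          (by nlinarith [mul_nonneg hnε hL, mul_nonneg n.cast_nonneg hL])

/-- A Gilbert–Varshamov bound inside an arbitrary set of sequences. -/
theorem exists_separated_subset_card_le_mul_two_rpow [Nonempty X] {ε : ℝ}
    (hε : ε ∈ Set.Ioo (0 : ℝ) 1) (T : Finset (ι → X)) :
    ∃ V ⊆ T, (∀ v ∈ V, ∀ w ∈ V, v ≠ w → Fintype.card ι * ε ≤ hammingDist v w) ∧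
      (#T : ℝ) ≤
        #V * 2 ^ (2 * (Fintype.card ι * (binEnt ε + ε * Real.logb 2 (Fintype.card X)))) := by
  set r := ⌊Fintype.card ι * ε⌋₊
  obtain ⟨V, hVT, hsep, hcard⟩ := exists_separated_subset_card_le_sum T r
  refine ⟨V, hVT, fun v hv w hw hvw => ?_, ?_⟩
  · exact (Nat.lt_floor_add_one _).le.trans (by exact_mod_cast hsep v hv w hw hvw)
  · have hr : (r : ℝ) ≤ Fintype.card ι * ε :=
      Nat.floor_le (mul_nonneg (Nat.cast_nonneg _) hε.1.le)
    calc (#T : ℝ) ≤ ∑ v ∈ V, (#{w | hammingDist v w ≤ r} : ℝ) := by exact_mod_cast hcard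
      _ ≤ ∑ v ∈ V, (2 : ℝ) ^ (2 * (Fintype.card ι *
            (binEnt ε + ε * Real.logb 2 (Fintype.card X)))) :=
          sum_le_sum fun v _ => card_hammingBall_le_two_rpow hε v hr
      _ = _ := by rw [sum_const, nsmul_eq_mul]

end GilbertVarshamov

theorem exists_hamming_separated_codebook_general
    {X : Type*} [Fintype X] [DecidableEq X]
    (ε R : ℝ) (hε : ε ∈ Set.Ioo (0 : ℝ) 1) :
    ∃ N : ℕ, ∀ n ≥ N, ∀ p : X → ℝ,
      (∀ x, 0 ≤ p x) → (∑ x, p x = 1) →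
      (∀ x, ∃ k : ℕ, p x = (k : ℝ) / n) →
      R ≤ shannonEntropy p - 3 * (binEnt ε + ε * Real.logb 2 (Fintype.card X)) →
      ∃ V : Finset (Fin n → X),
        (∀ v ∈ V, ∀ a : X,
          (((Finset.univ.filter (fun t => v t = a)).card : ℝ) / n = p a)) ∧
        (2 : ℝ) ^ ((n : ℝ) * R) / 2 ≤ (V.card : ℝ) ∧
        (∀ v ∈ V, ∀ v' ∈ V, v ≠ v' → (n : ℝ) * ε ≤ (hammingDist v v' : ℝ)) := by
  set θ := binEnt ε + ε * Real.logb 2 (Fintype.card X)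
  obtain ⟨N, hN⟩ := Filter.eventually_atTop.mp
    (eventually_add_one_pow_le_two_rpow (Fintype.card X) (binEnt_pos hε))
  refine ⟨max N 1, fun n hn p _ hsum htype hRH => ?_⟩
  choose k hk using htype
  have : NeZero n := ⟨by omega⟩
  have : Nonempty X := not_isEmpty_iff.mp fun _ => by simp at hsum
  have hkn : ∑ x, k x = Fintype.card (Fin n) := by
    have h : ∑ x, (k x : ℝ) / n = 1 := by simpa [hk] using hsum
    rw [← sum_div, div_eq_one_iff_eq (NeZero.ne (n : ℝ))] at h
    rw [Fintype.card_fin]; exact_mod_cast h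
  have hp : p = fun x => (k x : ℝ) / Fintype.card (Fin n) := by funext x; simp [hk]
  have hT := two_rpow_mul_shannonEntropy_le_card_typeClass hkn
  obtain ⟨V, hVT, hVsep, hTV⟩ :=
    exists_separated_subset_card_le_mul_two_rpow hε (typeClass (Fin n) k)
  rw [← hp] at hT
  simp only [Fintype.card_fin] at hT hTV hVsep
  have hθ : binEnt ε ≤ θ := le_add_of_nonneg_right (mul_nonneg hε.1.le
    (Real.logb_nonneg one_lt_two (by exact_mod_cast Fintype.card_pos)))
  have hpoly : ((n : ℝ) + 1) ^ Fintype.card X ≤ 2 ^ (n * θ) :=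
    (hN n (le_of_max_le_left hn)).trans (Real.rpow_le_rpow_of_exponent_le one_le_two (by gcongr))
  have hV : (2 : ℝ) ^ (n * R) * 2 ^ (n * (3 * θ)) ≤ #V * 2 ^ (n * (3 * θ)) := calc
    _ = (2 : ℝ) ^ (n * (R + 3 * θ)) := by rw [← Real.rpow_add zero_lt_two]; ring_nf
    _ ≤ 2 ^ (n * shannonEntropy p) :=
        Real.rpow_le_rpow_of_exponent_le one_le_two (by gcongr; linarith)
    _ ≤ ((n : ℝ) + 1) ^ Fintype.card X * #(typeClass (Fin n) k) := hT
    _ ≤ 2 ^ (n * θ) * (#V * 2 ^ (2 * (n * θ))) := by gcongr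
    _ = #V * 2 ^ (n * (3 * θ)) := by rw [mul_left_comm, ← Real.rpow_add zero_lt_two]; ring_nf
  refine ⟨V, fun v hv a => by rw [mem_typeClass.mp (hVT hv) a, hk], ?_, hVsep⟩
  exact (half_le_self (by positivity)).trans (le_of_mul_le_mul_right hV (by positivity))

/-- Existence of a large Hamming-separated codebook inside a type class: for all sufficiently
large `n`, for every `n`-type `p` on `X` with `R ≤ H(p) − 3θ(ε)` (where
`θ(ε) = H₂(ε) + ε log₂|X|`), there is a set `V` of sequences of type `p` with
`|V| ≥ 2^{nR}/2` whose elements are pairwise at Hamming distance at least `nε`. -/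
theorem exists_hamming_separated_codebook
    {X : Type*} [Fintype X] [DecidableEq X]
    (ε R : ℝ) (hε : ε ∈ Set.Ioo (0 : ℝ) 1) (hR : 0 < R) :
    ∃ N : ℕ, ∀ n ≥ N, ∀ p : X → ℝ,
      (∀ x, 0 ≤ p x) → (∑ x, p x = 1) →
      (∀ x, ∃ k : ℕ, p x = (k : ℝ) / n) →
      R ≤ shannonEntropy p - 3 * (binEnt ε + ε * Real.logb 2 (Fintype.card X)) →
      ∃ V : Finset (Fin n → X),
        (∀ v ∈ V, ∀ a : X,
          (((Finset.univ.filter (fun t => v t = a)).card : ℝ) / n = p a)) ∧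
        (2 : ℝ) ^ ((n : ℝ) * R) / 2 ≤ (V.card : ℝ) ∧
        (∀ v ∈ V, ∀ v' ∈ V, v ≠ v' → (n : ℝ) * ε ≤ (hammingDist v v' : ℝ)) :=
  exists_hamming_separated_codebook_general ε R hε
end
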